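/- (Poisson approximation for colored balls into bins, event form.) Fix integers n ≥ 1, k ≥ 1 and h_1,…,h_k ≥ 1. Let X_{u,i} be the number of color-i balls in bin u when, for each i, h_i balls of color i are thrown independently and uniformly at random into n bins (all throws mutually independent), and let Y_{u,i} be mutually independent Poisson(h_i/n) random variables. Then for every set A of count-configurations (i.e., every set of functions from {1,…,n}×{1,…,k} to ℕ), Pr((X_{u,i})_{u,i} ∈ A) ≤ e^k·√(∏_{i=1}^k h_i)·Pr((Y_{u,i})_{u,i} ∈ A). -/

import Mathlib

/-!
For a fixed configuration `a` whose column sums are the `h i`, the balls of colour `i` produce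
the column `a (·) i` with multinomial probability `h i! / ∏ u, (a u i)! · n^(-h i)`, while the
independent Poisson variables produce it with probability
`e^(-h i) (h i)^(h i) n^(-h i) / ∏ u, (a u i)!`. The ratio is `h i! e^(h i) / (h i)^(h i)`,
at most `e √(h i)` by Stirling's bound, and multiplying over colours and summing over the
configurations in `A` gives the claim.
-/

open MeasureTheory ProbabilityTheory
open scoped BigOperators ENNReal
open scoped Nat
open Real

section Occupancy

variable {α ι : Type*} [Fintype α] [DecidableEq ι]

def occupancy (f : α → ι) (u : ι) : ℕ := Finset.card {x | f x = u}

lemma occupancy_eq_card_fiber (f : α → ι) (u : ι) :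
    occupancy f u = Fintype.card {x // f x = u} :=
  (Fintype.card_subtype _).symm

lemma sum_occupancy [Fintype ι] (f : α → ι) : ∑ u, occupancy f u = Fintype.card α :=
  (Finset.card_eq_sum_card_fiberwise fun x _ => Finset.mem_univ (f x)).symm

lemma exists_perm_comp_eq_of_occupancy_eq {f g : α → ι} (h : occupancy f = occupancy g) :
    ∃ σ : Equiv.Perm α, g ∘ σ = f := by
  have e : ∀ u, {x // f x = u} ≃ {x // g x = u} := fun u =>
    Fintype.equivOfCardEq (by rw [← occupancy_eq_card_fiber, ← occupancy_eq_card_fiber, h])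
  refine ⟨(Equiv.sigmaFiberEquiv f).symm.trans
    ((Equiv.sigmaCongrRight e).trans (Equiv.sigmaFiberEquiv g)), funext fun x => ?_⟩
  exact (e (f x) ⟨x, rfl⟩).2

lemma card_occupancy_mul_prod_factorial_le [Fintype ι] (a : ι → ℕ) :
    Nat.card {f : α → ι // occupancy f = a} * ∏ u, (a u)! ≤ (Fintype.card α)! := by
  rcases isEmpty_or_nonempty {f : α → ι // occupancy f = a} with _ | ⟨f₀, hf₀⟩
  · simp
  -- orbit–stabilizer for permutations of `α` acting on `α → ι` by precomposition
  let G := (Equiv.Perm α)ᵈᵐᵃ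
  have horbit : Nat.card {f : α → ι // occupancy f = a} ≤ Nat.card (MulAction.orbit G f₀) := by
    refine Nat.card_mono (Set.toFinite _) fun f (hf : occupancy f = a) => ?_
    obtain ⟨σ, hσ⟩ := exists_perm_comp_eq_of_occupancy_eq (hf.trans hf₀.symm)
    exact ⟨DomMulAct.mk σ, hσ⟩
  have hstab : Nat.card (MulAction.stabilizer G f₀) = ∏ u, (a u)! := by
    classical
    rw [Nat.card_congr (MulOpposite.opEquiv (α := MulAction.stabilizer G f₀)),
      Nat.card_congr (DomMulAct.stabilizerMulEquiv f₀).toEquiv, Nat.card_pi, ← hf₀]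
    simp only [Nat.card_eq_fintype_card, occupancy_eq_card_fiber]
    exact Finset.prod_congr rfl fun u _ => Fintype.card_perm
  calc _ ≤ Nat.card (MulAction.orbit G f₀) * Nat.card (MulAction.stabilizer G f₀) := by
        rw [hstab]; exact Nat.mul_le_mul_right _ horbit
    _ = Nat.card G := by
        rw [Nat.card_coe_set_eq, ← MulAction.index_stabilizer, mul_comm,
          Subgroup.card_mul_index]
    _ = (Fintype.card α)! := by
        rw [Nat.card_congr DomMulAct.mk.symm, Nat.card_perm, Nat.card_eq_fintype_card]

end Occupancy

lemma Nat.factorial_le_exp_one_mul_sqrt_mul_pow {m : ℕ} (hm : m ≠ 0) :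
    (m ! : ℝ) ≤ exp 1 * √m * (m / exp 1) ^ m := by
  obtain ⟨j, rfl⟩ := Nat.exists_eq_succ_of_ne_zero hm
  have hseq : Stirling.stirlingSeq (j + 1) ≤ exp 1 / √2 :=
    Stirling.stirlingSeq_one ▸ Stirling.stirlingSeq'_antitone (Nat.zero_le j)
  rw [Stirling.stirlingSeq, div_le_div_iff₀ (by positivity) (by positivity),
    ← le_div_iff₀ (by positivity), Real.sqrt_mul zero_le_two] at hseq
  refine hseq.trans_eq ?_
  field_simp

lemma prod_exp_neg_mul_pow_div_factorial {ι : Type*} [Fintype ι] (r : ℝ) (b : ι → ℕ) :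
    ∏ u, exp (-r) * r ^ b u / (b u)! =
      exp (-(r * Fintype.card ι)) * r ^ (∑ u, b u) / ∏ u, ((b u)! : ℝ) := by
  rw [Finset.prod_div_distrib, Finset.prod_mul_distrib, Finset.prod_const,
    Finset.prod_pow_eq_pow_sum, ← Real.exp_nat_mul, Finset.card_univ]
  ring_nf

lemma card_occupancy_mul_inv_pow_le {α ι : Type*} [Fintype α] [Fintype ι] [Nonempty ι]
    [DecidableEq ι] (hα : Fintype.card α ≠ 0) (b : ι → ℕ) :
    (Nat.card {f : α → ι // occupancy f = b} : ℝ≥0∞) * (Fintype.card ι : ℝ≥0∞)⁻¹ ^ Fintype.card α ≤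
      ENNReal.ofReal (exp 1 * √(Fintype.card α)) * ∏ u, ENNReal.ofReal
        (exp (-(Fintype.card α / Fintype.card ι)) *
          ((Fintype.card α : ℝ) / Fintype.card ι) ^ b u / (b u)!) := by
  set m := Fintype.card α
  set N := Fintype.card ι
  rcases isEmpty_or_nonempty {f : α → ι // occupancy f = b} with _ | ⟨f₀, hf₀⟩
  · simp
  have hN : (0 : ℝ) < N := Nat.cast_pos.mpr Fintype.card_pos
  have hsum : ∑ u, b u = m := hf₀ ▸ sum_occupancy f₀
  have hcount : (Nat.card {f : α → ι // occupancy f = b} : ℝ) * ∏ u, ((b u)! : ℝ) ≤ m ! := by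
    exact_mod_cast card_occupancy_mul_prod_factorial_le b
  rw [← ENNReal.ofReal_prod_of_nonneg fun u _ => by positivity, ← ENNReal.ofReal_mul
    (by positivity), ← ENNReal.ofReal_natCast, ← ENNReal.ofReal_natCast N,
    ← ENNReal.ofReal_inv_of_pos hN, ← ENNReal.ofReal_pow (by positivity),
    ← ENNReal.ofReal_mul (by positivity)]
  refine ENNReal.ofReal_le_ofReal ?_
  rw [prod_exp_neg_mul_pow_div_factorial, hsum, ← mul_div_assoc, le_div_iff₀ (by positivity)]
  calc _ = (Nat.card {f : α → ι // occupancy f = b} : ℝ) * (∏ u, ((b u)! : ℝ)) *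
        (N : ℝ)⁻¹ ^ m := by ring
    _ ≤ exp 1 * √m * (m / exp 1) ^ m * (N : ℝ)⁻¹ ^ m :=
        mul_le_mul_of_nonneg_right
          (hcount.trans (Nat.factorial_le_exp_one_mul_sqrt_mul_pow hα)) (by positivity)
    _ = _ := by
        rw [div_mul_cancel₀ _ hN.ne', Real.exp_neg, ← exp_one_pow, div_pow, div_pow, inv_pow]
        field_simp

variable {Ω : Type*} [MeasurableSpace Ω] {μ : Measure Ω}

lemma measure_preimage_le_mul_of_forall_singleton {β : Type*} [MeasurableSpace β]
    [MeasurableSingletonClass β] [Countable β] {X Y : Ω → β} (hY : Measurable Y) {c : ℝ≥0∞}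
    (h : ∀ b, μ (X ⁻¹' {b}) ≤ c * μ (Y ⁻¹' {b})) (A : Set β) :
    μ (X ⁻¹' A) ≤ c * μ (Y ⁻¹' A) :=
  calc μ (X ⁻¹' A) ≤ ∑' b : A, μ (X ⁻¹' {b.1}) := by
        rw [← Set.biUnion_preimage_singleton]
        exact measure_biUnion_le μ A.to_countable _
    _ ≤ ∑' b : A, c * μ (Y ⁻¹' {b.1}) := ENNReal.tsum_le_tsum fun b => h b
    _ = c * μ (Y ⁻¹' A) := by
        rw [ENNReal.tsum_mul_left,
          tsum_measure_preimage_singleton A.to_countable fun b _ => hY (measurableSet_singleton b)]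

lemma ProbabilityTheory.iIndepFun.measure_forall_eq {ι : Type*} [Fintype ι] {β : ι → Type*}
    [∀ i, MeasurableSpace (β i)] [∀ i, MeasurableSingletonClass (β i)] {f : ∀ i, Ω → β i}
    (hf : iIndepFun f μ) (x : ∀ i, β i) :
    μ {ω | ∀ i, f i ω = x i} = ∏ i, μ {ω | f i ω = x i} := by
  have := hf.measure_inter_preimage_eq_mul Finset.univ (sets := fun i => {x i})
    fun i _ => measurableSet_singleton _
  simpa [Set.preimage, Set.iInter_ofPred] using this

lemma ProbabilityTheory.iIndepFun.measure_mem_le_card_mul_pow {β ι : Type*} [Fintype β]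
    [Finite ι] [MeasurableSpace ι] [MeasurableSingletonClass ι] {B : β → Ω → ι}
    (hB : iIndepFun B μ) {p : ℝ≥0∞} (hp : ∀ b v, μ {ω | B b ω = v} = p) (S : Set (β → ι)) :
    μ {ω | (fun b => B b ω) ∈ S} ≤ Nat.card S * p ^ Fintype.card β :=
  calc μ {ω | (fun b => B b ω) ∈ S} ≤ ∑' g : S, μ {ω | ∀ b, B b ω = g.1 b} := by
        refine (measure_mono fun ω hω => ?_).trans
          (measure_biUnion_le μ S.to_countable fun g => {ω | ∀ b, B b ω = g b})
        exact Set.mem_biUnion hω fun b => rfl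
    _ = Nat.card S * p ^ Fintype.card β := by
        simp only [hB.measure_forall_eq, hp, Finset.prod_const, Finset.card_univ,
          ENNReal.tsum_const, ENat.card_eq_coe_natCard]
        rfl

lemma Nat.card_subtype_forall_sigma {κ γ : Type*} [Fintype κ] {β : κ → Type*}
    (P : ∀ i, (β i → γ) → Prop) :
    Nat.card {g : (Σ i, β i) → γ // ∀ i, P i fun b => g ⟨i, b⟩} =
      ∏ i, Nat.card {f : β i → γ // P i f} := by
  rw [← Nat.card_pi]
  exact Nat.card_congr (((Equiv.piCurry fun i _ => γ).subtypeEquiv fun g => Iff.rfl).trans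
    (Equiv.subtypePiEquivPi))

lemma ProbabilityTheory.iIndepFun.measure_forall_occupancy_eq_le {κ ι : Type*} [Fintype κ]
    {β : κ → Type*} [∀ i, Fintype (β i)] [Finite ι] [DecidableEq ι] [MeasurableSpace ι]
    [MeasurableSingletonClass ι] {B : (Σ i, β i) → Ω → ι} (hB : iIndepFun B μ) {p : ℝ≥0∞}
    (hp : ∀ b v, μ {ω | B b ω = v} = p) (a : ι → κ → ℕ) :
    μ {ω | ∀ i, occupancy (fun b => B ⟨i, b⟩ ω) = fun u => a u i} ≤
      ∏ i, (Nat.card {f : β i → ι // occupancy f = fun u => a u i} : ℝ≥0∞) *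
        p ^ Fintype.card (β i) := by
  refine (hB.measure_mem_le_card_mul_pow hp
    {g | ∀ i, occupancy (fun b => g ⟨i, b⟩) = fun u => a u i}).trans_eq ?_
  rw [Finset.prod_mul_distrib, Finset.prod_pow_eq_pow_sum, ← Nat.cast_prod,
    ← Nat.card_subtype_forall_sigma, Fintype.card_sigma]
  rfl

lemma ProbabilityTheory.iIndepFun.measure_curry_eq {κ ι β : Type*} [Fintype κ] [Fintype ι]
    [MeasurableSpace β] [MeasurableSingletonClass β] {Y : κ → ι → Ω → β}
    (hY : iIndepFun (fun p : κ × ι => Y p.1 p.2) μ) (a : κ → ι → β) :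
    μ {ω | (fun u i => Y u i ω) = a} = ∏ i, ∏ u, μ {ω | Y u i ω = a u i} := by
  have : {ω | (fun u i => Y u i ω) = a} = {ω | ∀ p : κ × ι, Y p.1 p.2 ω = a p.1 p.2} := by
    ext; simp [funext_iff]
  rw [this, hY.measure_forall_eq (fun p => a p.1 p.2), Fintype.prod_prod_type, Finset.prod_comm]

theorem poisson_approximation_event_general
    (n k : ℕ) (hn : 1 ≤ n) (h : Fin k → ℕ) (hh : ∀ i, 1 ≤ h i)
    {Ω : Type} [MeasurableSpace Ω] (μ : Measure Ω)
    (B : (Σ i : Fin k, Fin (h i)) → Ω → Fin n)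
    (Y : Fin n → Fin k → Ω → ℕ)
    (hYmeas : ∀ u i, Measurable (Y u i))
    (hBunif : ∀ b v, μ {ω | B b ω = v} = (n : ℝ≥0∞)⁻¹)
    (hBindep : iIndepFun B μ)
    (hYpois : ∀ u i a, μ {ω | Y u i ω = a} =
      ENNReal.ofReal (Real.exp (-((h i : ℝ) / n)) * ((h i : ℝ) / n) ^ a / a.factorial))
    (hYindep : iIndepFun
      (fun ui : Fin n × Fin k => Y ui.1 ui.2) μ)
    (X : Fin n → Fin k → Ω → ℕ)
    (hX : ∀ u i ω, X u i ω =
      (Finset.univ.filter fun b : Fin (h i) => B ⟨i, b⟩ ω = u).card)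
    (A : Set (Fin n → Fin k → ℕ)) :
    μ {ω | (fun u i => X u i ω) ∈ A}
      ≤ ENNReal.ofReal (Real.exp k * Real.sqrt (∏ i, (h i : ℝ))) *
        μ {ω | (fun u i => Y u i ω) ∈ A} := by
  refine measure_preimage_le_mul_of_forall_singleton (X := fun ω u i => X u i ω)
    (Y := fun ω u i => Y u i ω) (by fun_prop) (fun a => ?_) A
  have hXa : (fun ω u i => X u i ω) ⁻¹' {a} =
      {ω | ∀ i, occupancy (fun b => B ⟨i, b⟩ ω) = fun u => a u i} := by
    ext ω
    simp [hX, occupancy, funext_iff, forall_comm (α := Fin n)]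
  have hC : ENNReal.ofReal (exp k * √(∏ i, (h i : ℝ))) =
      ∏ i, ENNReal.ofReal (exp 1 * √(h i)) := by
    rw [← ENNReal.ofReal_prod_of_nonneg fun i _ => by positivity, Finset.prod_mul_distrib,
      Real.sqrt_prod _ fun i _ => by positivity, Finset.prod_const, Finset.card_univ,
      Fintype.card_fin, exp_one_pow]
  have : Nonempty (Fin n) := ⟨⟨0, hn⟩⟩
  rw [hXa, show (fun ω u i => Y u i ω) ⁻¹' {a} = {ω | (fun u i => Y u i ω) = a} from rfl,
    hYindep.measure_curry_eq, hC, ← Finset.prod_mul_distrib]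
  refine (hBindep.measure_forall_occupancy_eq_le hBunif a).trans
    (Finset.prod_le_prod' fun i _ => ?_)
  have hhi : Fintype.card (Fin (h i)) ≠ 0 := by simpa using Nat.one_le_iff_ne_zero.mp (hh i)
  simpa [hYpois] using card_occupancy_mul_inv_pow_le hhi fun u => a u i

/-- **Poisson approximation for colored balls into bins (event form).**
For each color `i ∈ {1,…,k}`, `h i` balls of color `i` are thrown independently
and uniformly at random into `n` bins (`B b` is the bin of ball `b`, all throws
mutually independent), and `X u i` counts the color-`i` balls in bin `u`; the
`Y u i` are mutually independent `Poisson(h i / n)` variables. Then for every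
set `A` of count-configurations,
`Pr(X ∈ A) ≤ e^k √(∏ i, h i) Pr(Y ∈ A)`. -/
theorem poisson_approximation_event
    (n k : ℕ) (hn : 1 ≤ n) (hk : 1 ≤ k) (h : Fin k → ℕ) (hh : ∀ i, 1 ≤ h i)
    {Ω : Type} [MeasurableSpace Ω] (μ : Measure Ω) [IsProbabilityMeasure μ]
    (B : (Σ i : Fin k, Fin (h i)) → Ω → Fin n)
    (Y : Fin n → Fin k → Ω → ℕ)
    (hBmeas : ∀ b, Measurable (B b))
    (hYmeas : ∀ u i, Measurable (Y u i))
    (hBunif : ∀ b v, μ {ω | B b ω = v} = (n : ℝ≥0∞)⁻¹)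
    (hBindep : iIndepFun B μ)
    (hYpois : ∀ u i a, μ {ω | Y u i ω = a} =
      ENNReal.ofReal (Real.exp (-((h i : ℝ) / n)) * ((h i : ℝ) / n) ^ a / a.factorial))
    (hYindep : iIndepFun
      (fun ui : Fin n × Fin k => Y ui.1 ui.2) μ)
    (X : Fin n → Fin k → Ω → ℕ)
    (hX : ∀ u i ω, X u i ω =
      (Finset.univ.filter fun b : Fin (h i) => B ⟨i, b⟩ ω = u).card)
    (A : Set (Fin n → Fin k → ℕ)) :
    μ {ω | (fun u i => X u i ω) ∈ A}
      ≤ ENNReal.ofReal (Real.exp k * Real.sqrt (∏ i, (h i : ℝ))) *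
        μ {ω | (fun u i => Y u i ω) ∈ A} :=
  poisson_approximation_event_general n k hn h hh μ B Y hYmeas hBunif hBindep hYpois hYindep X hX A
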